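/- arXiv:1003.3700 — 8 statements merged into one kernel-verified Lean document; each statement's English description precedes it below -/
import Mathlib

section
/- Let S be a finite set of points in a metric space. Define a graph on S by declaring {x,y} an edge if and only if x ≠ y and there is no finite sequence x = k₀, k₁, …, k_m = y of points of S with max_{1≤i≤m} d(k_{i−1}, k_i) < d(x, y). Then this graph is connected: for any two points x, y of S there is a path of edges in the graph joining x to y. -/
/-!
Induct on `dist x y`, which is possible since a finite set has only finitely many pairs.
If `x` and `y` are not adjacent, some chain from `x` to `y` has all its steps strictly shorter
than `dist x y`; by induction the endpoints of each step are joined by a path, and these paths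
concatenate to one from `x` to `y`.
-/

namespace SimpleGraph

variable {V : Type*} (G : SimpleGraph V)

theorem reachable_of_forall_reachable_succ {k : ℕ → V} {m : ℕ}
    (h : ∀ i < m, G.Reachable (k i) (k (i + 1))) : G.Reachable (k 0) (k m) := by
  induction m with
  | zero => rfl
  | succ m ih => exact (ih fun i hi => h i (by omega)).trans (h m m.lt_succ_self)

theorem reachable_of_exists_chain_lt [Finite V] {β : Type*} [Preorder β] (w : V → V → β)
    (h : ∀ x y, x ≠ y → ¬ G.Adj x y →
      ∃ (m : ℕ) (k : ℕ → V), k 0 = x ∧ k m = y ∧ ∀ i < m, w (k i) (k (i + 1)) < w x y)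
    (x y : V) : G.Reachable x y := by
  have hwf : WellFounded (InvImage (· < ·) fun p : V × V => w p.1 p.2) :=
    Finite.wellFounded_of_trans_of_irrefl _
  suffices ∀ p : V × V, G.Reachable p.1 p.2 from this (x, y)
  intro p
  induction p using hwf.induction with
  | _ p ih =>
  obtain ⟨x, y⟩ := p
  by_cases hxy : x = y
  · exact hxy ▸ .rfl
  by_cases hadj : G.Adj x y
  · exact hadj.reachable
  obtain ⟨m, k, rfl, rfl, hstep⟩ := h x y hxy hadj
  exact G.reachable_of_forall_reachable_succ fun i hi => ih (k i, k (i + 1)) (hstep i hi)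

end SimpleGraph

/-- The MST graph on a finite set `S` of points in a metric space, with edges
`{x,y}` iff `x ≠ y` and there is no finite sequence `x = k₀, k₁, …, k_m = y` of
points of `S` all of whose steps are strictly shorter than `dist x y`,
is connected: any two points of `S` are joined by a path of edges. -/
theorem mst_graph_connected {α : Type*} [MetricSpace α] (S : Finset α)
    (G : SimpleGraph {x // x ∈ S})
    (hG : ∀ x y : {x // x ∈ S}, G.Adj x y ↔
      (x ≠ y ∧ ¬ ∃ (m : ℕ) (k : ℕ → {x // x ∈ S}), 0 < m ∧ k 0 = x ∧ k m = y ∧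
        ∀ i < m, dist (k i : α) (k (i + 1) : α) < dist (x : α) (y : α))) :
    ∀ x y : {x // x ∈ S}, G.Reachable x y := by
  refine G.reachable_of_exists_chain_lt (fun x y => dist (x : α) (y : α)) fun x y hxy hadj => ?_
  obtain ⟨m, k, -, hk⟩ := not_not.mp fun h => hadj ((hG x y).mpr ⟨hxy, h⟩)
  exact ⟨m, k, hk⟩
end

section
/- Let S be a set of points in the Euclidean plane ℝ² and let x, y ∈ S with x ≠ y. If there is no point z ∈ S with dist(x,z) < dist(x,y) and dist(z,y) < dist(x,y), then there is no point z ∈ S with dist(z, midpoint(x,y)) < dist(x,y)/2. In other words, every edge of the relative neighborhood graph is an edge of the Gabriel graph. -/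
open Metric

theorem ball_midpoint_subset_ball_inter_ball {V P : Type*} [NormedAddCommGroup V]
    [NormedSpace ℝ V] [PseudoMetricSpace P] [NormedAddTorsor V P] (x y : P) :
    ball (midpoint ℝ x y) (dist x y / 2) ⊆ ball x (dist x y) ∩ ball y (dist x y) := by
  refine Set.subset_inter (ball_subset_ball' ?_) (ball_subset_ball' ?_)
  · rw [dist_midpoint_left, Real.norm_two]
    linarith
  · rw [dist_midpoint_right, Real.norm_two]
    linarith

theorem relativeNeighborhood_subset_gabriel_general
    (S : Set (EuclideanSpace ℝ (Fin 2))) (x y : EuclideanSpace ℝ (Fin 2))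
    (h : ¬ ∃ z ∈ S, dist x z < dist x y ∧ dist z y < dist x y) :
    ¬ ∃ z ∈ S, dist z (midpoint ℝ x y) < dist x y / 2 := by
  rintro ⟨z, hz, hz_disc⟩
  obtain ⟨hzx, hzy⟩ := ball_midpoint_subset_ball_inter_ball x y (mem_ball.2 hz_disc)
  exact h ⟨z, hz, mem_ball'.1 hzx, mem_ball.1 hzy⟩

/-- Every edge of the relative neighborhood graph is an edge of the Gabriel graph:
if there is no `z ∈ S` with `dist x z < dist x y` and `dist z y < dist x y`, then
there is no `z ∈ S` strictly inside the open disc whose diameter is the segment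
from `x` to `y`. -/
theorem relativeNeighborhood_subset_gabriel
    (S : Set (EuclideanSpace ℝ (Fin 2))) (x y : EuclideanSpace ℝ (Fin 2))
    (hx : x ∈ S) (hy : y ∈ S) (hxy : x ≠ y)
    (h : ¬ ∃ z ∈ S, dist x z < dist x y ∧ dist z y < dist x y) :
    ¬ ∃ z ∈ S, dist z (midpoint ℝ x y) < dist x y / 2 :=
  relativeNeighborhood_subset_gabriel_general S x y h
end

section
/- Let S be a finite set of points in a metric space. The relative neighborhood graph on S, with edge set {x,y} an edge iff x ≠ y and there is no z ∈ S with d(x,z) < d(x,y) and d(z,y) < d(x,y), is connected: any two points of S are joined by a path of edges. -/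
/-!
Induct on the distance `d(x, y)`, which is well founded because `S` is finite: if `x ≠ y` are
not adjacent, the witness `z` is strictly closer to each of them than they are to each other,
so `x, z` and `z, y` are joined by paths by induction.
-/

namespace SimpleGraph

variable {V β : Type*} [Finite V] [Preorder β]

theorem reachable_of_exists_lt_lt (G : SimpleGraph V) (w : V → V → β)
    (h : ∀ x y, x ≠ y → ¬ G.Adj x y → ∃ z, w x z < w x y ∧ w z y < w x y) (x y : V) :
    G.Reachable x y := by
  let shorter : V × V → V × V → Prop := fun p q => w p.1 p.2 < w q.1 q.2
  have : IsTrans (V × V) shorter := ⟨fun _ _ _ => lt_trans⟩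
  have : Std.Irrefl shorter := ⟨fun _ => lt_irrefl _⟩
  suffices ∀ p : V × V, G.Reachable p.1 p.2 from this (x, y)
  refine (Finite.wellFounded_of_trans_of_irrefl shorter).fix ?_
  rintro ⟨x, y⟩ ih
  by_cases hxy : x = y
  · exact hxy ▸ Reachable.refl x
  by_cases hadj : G.Adj x y
  · exact hadj.reachable
  obtain ⟨z, hxz, hzy⟩ := h x y hxy hadj
  exact (ih (x, z) hxz).trans (ih (z, y) hzy)

end SimpleGraph

/-- The relative neighborhood graph on a finite set `S` of points in a metric
space — edges `{x,y}` iff `x ≠ y` and no `z ∈ S` has `dist x z < dist x y` and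
`dist z y < dist x y` — is connected: any two points of `S` are joined by a
path of edges. -/
theorem relativeNeighborhood_connected {α : Type*} [MetricSpace α] (S : Finset α)
    (G : SimpleGraph {x // x ∈ S})
    (hG : ∀ x y : {x // x ∈ S}, G.Adj x y ↔
      (x ≠ y ∧ ¬ ∃ z : {x // x ∈ S},
        dist (x : α) (z : α) < dist (x : α) (y : α) ∧
        dist (z : α) (y : α) < dist (x : α) (y : α))) :
    ∀ x y : {x // x ∈ S}, G.Reachable x y := by
  refine G.reachable_of_exists_lt_lt (fun a b => dist (a : α) b) fun x y hxy hadj => ?_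
  by_contra hno
  exact hadj ((hG x y).2 ⟨hxy, hno⟩)
end

section
/- Let S be a finite set of points in the Euclidean plane ℝ². The Gabriel graph on S, with edge set {x,y} an edge iff x ≠ y and there is no z ∈ S with dist(z, midpoint(x,y)) < dist(x,y)/2, is connected: any two points of S are joined by a path of edges. -/
/-! If `x` and `y` are not adjacent in the Gabriel graph, some `z` lies in the open disc with
diameter `xy`, and then `z` is strictly closer to both `x` and `y` than they are to each other.
Induction on `dist x y` over the finitely many pairs of points joins `x` to `y` through `z`. -/

theorem SimpleGraph.preconnected_of_exists_closer {V β : Type*} [Finite V] [Preorder β]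
    (G : SimpleGraph V) (d : V → V → β)
    (h : ∀ x y, x ≠ y → ¬G.Adj x y → ∃ z, d x z < d x y ∧ d z y < d x y) :
    G.Preconnected := by
  have wf : WellFounded (InvImage (· < ·) fun p : V × V => d p.1 p.2) :=
    Finite.wellFounded_of_trans_of_irrefl _
  suffices ∀ p : V × V, G.Reachable p.1 p.2 from fun x y => this (x, y)
  intro p
  induction p using wf.induction with
  | _ p ih =>
    obtain ⟨x, y⟩ := p
    by_cases hxy : x = y
    · exact hxy ▸ .rfl
    by_cases hadj : G.Adj x y
    · exact hadj.reachable
    obtain ⟨z, hxz, hzy⟩ := h x y hxy hadj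
    exact (ih (x, z) hxz).trans (ih (z, y) hzy)

section Midpoint

variable {V P : Type*} [SeminormedAddCommGroup V] [NormedSpace ℝ V] [PseudoMetricSpace P]
  [NormedAddTorsor V P] {x y z : P}

theorem dist_left_lt_of_dist_midpoint_lt (h : dist z (midpoint ℝ x y) < dist x y / 2) :
    dist x z < dist x y :=
  calc dist x z ≤ dist x (midpoint ℝ x y) + dist z (midpoint ℝ x y) := dist_triangle_right _ _ _
    _ = dist x y / 2 + dist z (midpoint ℝ x y) := by
      rw [dist_left_midpoint (𝕜 := ℝ), Real.norm_two, inv_mul_eq_div]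
    _ < dist x y / 2 + dist x y / 2 := by gcongr
    _ = dist x y := add_halves _

theorem dist_right_lt_of_dist_midpoint_lt (h : dist z (midpoint ℝ x y) < dist x y / 2) :
    dist z y < dist x y := by
  rw [midpoint_comm, dist_comm x] at h
  rw [dist_comm z, dist_comm x]
  exact dist_left_lt_of_dist_midpoint_lt h

end Midpoint

/-- The Gabriel graph on a finite set `S` of points in the Euclidean plane —
edges `{x,y}` iff `x ≠ y` and no `z ∈ S` lies strictly inside the open disc
whose diameter is the segment from `x` to `y` — is connected: any two points of
`S` are joined by a path of edges. -/
theorem gabriel_connected (S : Finset (EuclideanSpace ℝ (Fin 2)))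
    (G : SimpleGraph {x // x ∈ S})
    (hG : ∀ x y : {x // x ∈ S}, G.Adj x y ↔
      (x ≠ y ∧ ¬ ∃ z : {x // x ∈ S},
        dist (z : EuclideanSpace ℝ (Fin 2)) (midpoint ℝ (x : EuclideanSpace ℝ (Fin 2)) y) <
          dist (x : EuclideanSpace ℝ (Fin 2)) (y : EuclideanSpace ℝ (Fin 2)) / 2)) :
    ∀ x y : {x // x ∈ S}, G.Reachable x y := by
  refine G.preconnected_of_exists_closer (fun x y => dist (x : EuclideanSpace ℝ (Fin 2)) y)
    fun x y hxy hadj => ?_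
  rw [hG, not_and, not_not] at hadj
  obtain ⟨z, hz⟩ := hadj hxy
  exact ⟨z, dist_left_lt_of_dist_midpoint_lt hz, dist_right_lt_of_dist_midpoint_lt hz⟩
end

section
/- Identify the plane with ℂ and write v₋ = −1/2 and v₊ = 1/2. Let the lune be the intersection of the open discs of radius 1 centered at v₋ and v₊. Let A ⊆ ℂ satisfy A ⊆ lune and −A = A (invariance under z ↦ −z). For distinct x, y ∈ ℂ let A(x,y) be the image of A under the map z ↦ x + (y − x)(z + 1/2) (the orientation-preserving similarity taking v₋ to x and v₊ to y). Let S be a finite subset of ℂ, and define the proximity graph G on S by: {x,y} is an edge iff x ≠ y and A(x,y) contains no point of S. Then G is a well-defined (symmetric) graph and is connected. -/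
/-!
The similarity `w ↦ x + (y - x) * (w + 1/2)` scales distances to `v₋` and `v₊` by `dist x y`,
so a point of `S` in `A(x,y)` is strictly closer to both `x` and `y` than they are to each
other. Hence the proximity graph contains the relative neighbourhood graph of `S`, which is
connected: a non-adjacent pair is joined through such a point by two strictly shorter pairs,
and there are only finitely many pairs. Symmetry holds because `A(y,x)` is the image of
`-A = A` under the similarity for `(x, y)`.
-/

def relNeighborhoodGraph (V : Type*) [PseudoMetricSpace V] : SimpleGraph V where
  Adj x y := x ≠ y ∧ ∀ z, dist x y ≤ max (dist x z) (dist z y)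
  symm := ⟨fun _ _ ⟨hne, h⟩ => ⟨hne.symm, fun z => by
    simpa only [dist_comm, max_comm] using h z⟩⟩
  loopless := ⟨fun _ h => h.1 rfl⟩

theorem relNeighborhoodGraph_adj {V : Type*} [PseudoMetricSpace V] {x y : V} :
    (relNeighborhoodGraph V).Adj x y ↔ x ≠ y ∧ ∀ z, dist x y ≤ max (dist x z) (dist z y) :=
  Iff.rfl

theorem relNeighborhoodGraph_preconnected (V : Type*) [PseudoMetricSpace V] [Finite V] :
    (relNeighborhoodGraph V).Preconnected := by
  let shorter : V × V → V × V → Prop := fun p q => dist p.1 p.2 < dist q.1 q.2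
  have : IsTrans (V × V) shorter := ⟨fun _ _ _ => lt_trans⟩
  have : Std.Irrefl shorter := ⟨fun _ => lt_irrefl _⟩
  suffices ∀ p : V × V, (relNeighborhoodGraph V).Reachable p.1 p.2 from fun x y => this (x, y)
  refine (Finite.wellFounded_of_trans_of_irrefl shorter).fix fun ⟨x, y⟩ ih => ?_
  by_cases hxy : x = y
  · exact hxy ▸ .refl x
  by_cases hadj : ∀ z, dist x y ≤ max (dist x z) (dist z y)
  · exact (relNeighborhoodGraph_adj.mpr ⟨hxy, hadj⟩).reachable
  obtain ⟨z, hz⟩ := not_forall.mp hadj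
  obtain ⟨hxz, hzy⟩ := max_lt_iff.mp (not_le.mp hz)
  exact (ih (x, z) hxz).trans (ih (z, y) hzy)

theorem dist_similarity_left (x y w : ℂ) :
    dist (x + (y - x) * (w + 1/2)) x = dist x y * dist w (-(1/2)) := by
  rw [dist_eq_norm, dist_eq_norm', dist_eq_norm, ← norm_mul]
  ring_nf

theorem dist_similarity_right (x y w : ℂ) :
    dist (x + (y - x) * (w + 1/2)) y = dist x y * dist w (1/2) := by
  rw [dist_eq_norm, dist_eq_norm', dist_eq_norm, ← norm_mul]
  ring_nf

theorem max_dist_similarity_lt_of_mem_lune {x y w : ℂ} (hxy : x ≠ y)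
    (hw : dist w (-(1/2)) < 1 ∧ dist w (1/2) < 1) :
    max (dist x (x + (y - x) * (w + 1/2))) (dist (x + (y - x) * (w + 1/2)) y) < dist x y := by
  have hpos : 0 < dist x y := dist_pos.mpr hxy
  rw [dist_comm x, dist_similarity_left, dist_similarity_right, max_lt_iff]
  exact ⟨mul_lt_of_lt_one_right hpos hw.1, mul_lt_of_lt_one_right hpos hw.2⟩

/-- Proximity graphs are symmetric and connected. With the plane identified with
`ℂ`, `v₋ = -1/2`, `v₊ = 1/2`, the lune is the intersection of the open unit
discs centered at `v₋` and `v₊`. Let `A ⊆ lune` with `-A = A`, and for distinct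
`x, y` let `A(x,y)` be the image of `A` under `z ↦ x + (y - x) * (z + 1/2)`.
On a finite `S ⊆ ℂ`, the relation "`x ≠ y` and `A(x,y)` contains no point of
`S`" is symmetric (so defines a graph), and any graph with this adjacency is
connected. -/
theorem proximity_graph_connected (A : Set ℂ)
    (hlune : A ⊆ {z : ℂ | dist z (-(1/2) : ℂ) < 1 ∧ dist z ((1/2) : ℂ) < 1})
    (hsymA : ∀ z : ℂ, z ∈ A ↔ -z ∈ A)
    (S : Finset ℂ) (Adj : ℂ → ℂ → Prop)
    (hAdj : ∀ x y : ℂ, Adj x y ↔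
      (x ≠ y ∧ ∀ z ∈ S, z ∉ (fun w : ℂ => x + (y - x) * (w + 1/2)) '' A)) :
    (∀ x y : ℂ, Adj x y → Adj y x) ∧
      ∀ G : SimpleGraph {z // z ∈ S},
        (∀ x y : {z // z ∈ S}, G.Adj x y ↔ Adj (x : ℂ) (y : ℂ)) →
        ∀ x y : {z // z ∈ S}, G.Reachable x y := by
  refine ⟨fun x y hxy => ?_, fun G hG => ?_⟩
  · rw [hAdj] at hxy ⊢
    refine ⟨hxy.1.symm, fun z hz ⟨w, hw, hzw⟩ => hxy.2 z hz ⟨-w, (hsymA w).mp hw, ?_⟩⟩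
    rw [← hzw]
    ring
  · have hle : relNeighborhoodGraph {z // z ∈ S} ≤ G := fun x y ⟨hne, hrng⟩ => by
      have hne' : (x : ℂ) ≠ y := Subtype.coe_ne_coe.mpr hne
      refine (hG x y).mpr ((hAdj x y).mpr ⟨hne', ?_⟩)
      rintro z hz ⟨w, hw, rfl⟩
      exact (hrng ⟨_, hz⟩).not_gt (max_dist_similarity_lt_of_mem_lune hne' (hlune hw))
    exact (relNeighborhoodGraph_preconnected _).mono hle
end

section
/- Let x, y, u, v be four pairwise distinct points in the Euclidean plane ℝ². If the open segment from x to y and the open segment from u to v have a common point, then at least one of the following holds: dist(u, midpoint(x,y)) ≤ dist(x,y)/2, or dist(v, midpoint(x,y)) ≤ dist(x,y)/2, or dist(x, midpoint(u,v)) ≤ dist(u,v)/2, or dist(y, midpoint(u,v)) ≤ dist(u,v)/2. -/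
/-!
Let `p = a x + b y = c u + d v` be a common point of the two segments. Expanding the inner
products around `p` gives
`c ⟪x - u, y - u⟫ + d ⟪x - v, y - v⟫ = c d ‖u - v‖² - a b ‖x - y‖²`,
and the same identity with the roles of the segments exchanged has the opposite right-hand side.
So one of the two weighted sums is `≤ 0`, hence one of the four inner products is `≤ 0`, i.e. one
endpoint sees the other segment at a non-acute angle and (Thales) lies in its diameter disc.
-/

open scoped RealInnerProductSpace

variable {E : Type*} [NormedAddCommGroup E] [InnerProductSpace ℝ E]

theorem dist_midpoint_sq_eq_half_dist_sq_add_inner (x y u : E) :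
    dist u (midpoint ℝ x y) ^ 2 = (dist x y / 2) ^ 2 + ⟪x - u, y - u⟫ := by
  rw [dist_eq_norm, dist_eq_norm, midpoint_eq_smul_add, div_pow,
    ← real_inner_self_eq_norm_sq, ← real_inner_self_eq_norm_sq]
  simp only [inner_sub_left, inner_sub_right, inner_add_left, inner_add_right,
    real_inner_smul_left, real_inner_smul_right, real_inner_comm x y, real_inner_comm x u,
    real_inner_comm y u, invOf_eq_inv]
  ring

theorem dist_midpoint_le_half_dist_of_inner_nonpos {x y u : E} (h : ⟪x - u, y - u⟫ ≤ 0) :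
    dist u (midpoint ℝ x y) ≤ dist x y / 2 := by
  refine (pow_le_pow_iff_left₀ dist_nonneg (by positivity) two_ne_zero).1 ?_
  rw [dist_midpoint_sq_eq_half_dist_sq_add_inner]
  linarith

theorem mul_inner_sub_sub_add_mul_inner_sub_sub {u v p : E} {c d : ℝ} (hcd : c + d = 1)
    (hp : c • u + d • v = p) (x y : E) :
    c * ⟪x - u, y - u⟫ + d * ⟪x - v, y - v⟫ = ⟪x - p, y - p⟫ + c * d * ‖u - v‖ ^ 2 := by
  obtain rfl : d = 1 - c := by linarith
  subst hp
  rw [← real_inner_self_eq_norm_sq]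
  simp only [inner_sub_left, inner_sub_right, inner_add_left, inner_add_right,
    real_inner_smul_left, real_inner_smul_right, real_inner_comm u v,
    real_inner_comm y u, real_inner_comm y v]
  ring

theorem inner_sub_sub_eq_neg_mul_mul_norm_sq {x y p : E} {a b : ℝ} (hab : a + b = 1)
    (hp : a • x + b • y = p) : ⟪x - p, y - p⟫ = -(a * b * ‖x - y‖ ^ 2) := by
  have := mul_inner_sub_sub_add_mul_inner_sub_sub hab hp x y
  simp only [sub_self, inner_zero_left, inner_zero_right, mul_zero, add_zero] at this
  linarith

theorem nonpos_or_nonpos_of_mul_add_mul_nonpos {a b c d : ℝ} (hc : 0 ≤ c) (hd : 0 ≤ d)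
    (hcd : 0 < c + d) (h : c * a + d * b ≤ 0) : a ≤ 0 ∨ b ≤ 0 := by
  by_contra! hab
  rcases hc.eq_or_lt with rfl | hc
  · nlinarith [mul_pos (zero_add d ▸ hcd) hab.2]
  · nlinarith [mul_pos hc hab.1, mul_nonneg hd hab.2.le]

theorem dist_midpoint_le_half_dist_of_segment_inter_nonempty {x y u v : E}
    (h : (segment ℝ x y ∩ segment ℝ u v).Nonempty) :
    dist u (midpoint ℝ x y) ≤ dist x y / 2 ∨
    dist v (midpoint ℝ x y) ≤ dist x y / 2 ∨
    dist x (midpoint ℝ u v) ≤ dist u v / 2 ∨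
    dist y (midpoint ℝ u v) ≤ dist u v / 2 := by
  obtain ⟨p, ⟨a, b, ha, hb, hab, hp⟩, ⟨c, d, hc, hd, hcd, hp'⟩⟩ := h
  have hxy := mul_inner_sub_sub_add_mul_inner_sub_sub hcd hp' x y
  have huv := mul_inner_sub_sub_add_mul_inner_sub_sub hab hp u v
  rw [inner_sub_sub_eq_neg_mul_mul_norm_sq hab hp] at hxy
  rw [inner_sub_sub_eq_neg_mul_mul_norm_sq hcd hp'] at huv
  rcases le_total (c * ⟪x - u, y - u⟫ + d * ⟪x - v, y - v⟫) 0 with hle | hle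
  · rcases nonpos_or_nonpos_of_mul_add_mul_nonpos hc hd (by linarith) hle with h | h
    · exact Or.inl (dist_midpoint_le_half_dist_of_inner_nonpos h)
    · exact Or.inr (Or.inl (dist_midpoint_le_half_dist_of_inner_nonpos h))
  · have hle' : a * ⟪u - x, v - x⟫ + b * ⟪u - y, v - y⟫ ≤ 0 := by linarith
    rcases nonpos_or_nonpos_of_mul_add_mul_nonpos ha hb (by linarith) hle' with h | h
    · exact Or.inr (Or.inr (Or.inl (dist_midpoint_le_half_dist_of_inner_nonpos h)))
    · exact Or.inr (Or.inr (Or.inr (dist_midpoint_le_half_dist_of_inner_nonpos h)))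

theorem crossing_segments_gabriel_general (x y u v : EuclideanSpace ℝ (Fin 2))
    (hmeet : (openSegment ℝ x y ∩ openSegment ℝ u v).Nonempty) :
    dist u (midpoint ℝ x y) ≤ dist x y / 2 ∨
    dist v (midpoint ℝ x y) ≤ dist x y / 2 ∨
    dist x (midpoint ℝ u v) ≤ dist u v / 2 ∨
    dist y (midpoint ℝ u v) ≤ dist u v / 2 :=
  dist_midpoint_le_half_dist_of_segment_inter_nonempty <|
    hmeet.mono <|
      Set.inter_subset_inter (openSegment_subset_segment ..) (openSegment_subset_segment ..)

/-- Crossing segments and diameter discs (planarity of the Gabriel graph):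
if the open segments `(x, y)` and `(u, v)` between four pairwise distinct
points of the Euclidean plane meet, then one of the four endpoints lies in the
closed disc whose diameter is the other segment. -/
theorem crossing_segments_gabriel (x y u v : EuclideanSpace ℝ (Fin 2))
    (hxy : x ≠ y) (hxu : x ≠ u) (hxv : x ≠ v)
    (hyu : y ≠ u) (hyv : y ≠ v) (huv : u ≠ v)
    (hmeet : (openSegment ℝ x y ∩ openSegment ℝ u v).Nonempty) :
    dist u (midpoint ℝ x y) ≤ dist x y / 2 ∨
    dist v (midpoint ℝ x y) ≤ dist x y / 2 ∨
    dist x (midpoint ℝ u v) ≤ dist u v / 2 ∨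
    dist y (midpoint ℝ u v) ≤ dist u v / 2 :=
  crossing_segments_gabriel_general x y u v hmeet
end

section
/- Let p ≥ 2 be a real number, let S be a set of points in the Euclidean plane ℝ², and let x, y ∈ S with x ≠ y. Suppose that for every z ∈ S with z ≠ x and z ≠ y one has dist(x,z)^p + dist(z,y)^p ≥ dist(x,y)^p (i.e., no two-step route through a third city is cheaper than the direct edge for pth-power costs). Then no point z ∈ S with z ≠ x and z ≠ y satisfies dist(z, midpoint(x,y)) < dist(x,y)/2; that is, (x,y) is an edge of the Gabriel graph. -/
open EuclideanGeometry

/-! A point `z` strictly inside the disc with diameter `xy` sees `xy` at an obtuse angle, so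
`|xz|² + |zy|² < |xy|²` (Apollonius). For `p ≥ 2` the map `t ↦ t ^ (p / 2)` is
superadditive on `[0, ∞)`; applied to the squared distances this gives
`|xz| ^ p + |zy| ^ p < |xy| ^ p`, so the two-step route through `z` is cheaper than the
direct edge. -/

theorem dist_sq_add_dist_sq_lt_of_dist_midpoint_lt {V P : Type*} [NormedAddCommGroup V]
    [InnerProductSpace ℝ V] [MetricSpace P] [NormedAddTorsor V P] {x y z : P}
    (hz : dist z (midpoint ℝ x y) < dist x y / 2) :
    dist x z ^ 2 + dist z y ^ 2 < dist x y ^ 2 := by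
  have apollonius := dist_sq_add_dist_sq_eq_two_mul_dist_midpoint_sq_add_half_dist_sq z x y
  rw [dist_comm z x] at apollonius
  nlinarith [dist_nonneg (x := z) (y := midpoint ℝ x y)]

theorem Real.rpow_eq_sq_rpow_half {t : ℝ} (ht : 0 ≤ t) (p : ℝ) :
    t ^ p = (t ^ 2) ^ (p / 2) := by
  rw [← Real.rpow_two, ← Real.rpow_mul ht]
  ring_nf

theorem Real.rpow_add_rpow_lt_of_sq_add_sq_lt {a b c p : ℝ} (ha : 0 ≤ a) (hb : 0 ≤ b)
    (hc : 0 ≤ c) (hp : 2 ≤ p) (habc : a ^ 2 + b ^ 2 < c ^ 2) : a ^ p + b ^ p < c ^ p := by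
  rw [rpow_eq_sq_rpow_half ha, rpow_eq_sq_rpow_half hb, rpow_eq_sq_rpow_half hc]
  calc (a ^ 2) ^ (p / 2) + (b ^ 2) ^ (p / 2)
      ≤ (a ^ 2 + b ^ 2) ^ (p / 2) :=
        add_rpow_le_rpow_add (by positivity) (by positivity) (by linarith)
    _ < (c ^ 2) ^ (p / 2) := rpow_lt_rpow (by positivity) habc (by linarith)

theorem kumar_subset_gabriel_general (p : ℝ) (hp : 2 ≤ p)
    (S : Set (EuclideanSpace ℝ (Fin 2))) (x y : EuclideanSpace ℝ (Fin 2))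
    (h : ∀ z ∈ S, z ≠ x → z ≠ y →
      dist x y ^ p ≤ dist x z ^ p + dist z y ^ p) :
    ¬ ∃ z ∈ S, z ≠ x ∧ z ≠ y ∧ dist z (midpoint ℝ x y) < dist x y / 2 := by
  rintro ⟨z, hzS, hzx, hzy, hz⟩
  have cheaper_route : dist x z ^ p + dist z y ^ p < dist x y ^ p :=
    Real.rpow_add_rpow_lt_of_sq_add_sq_lt dist_nonneg dist_nonneg dist_nonneg hp
      (dist_sq_add_dist_sq_lt_of_dist_midpoint_lt hz)
  exact (h z hzS hzx hzy).not_gt cheaper_route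

/-- For `p ≥ 2` the network `G_p` is a subgraph of the Gabriel graph:
if for every third city `z ∈ S` the two-step route through `z` is not cheaper
for `p`th-power costs, i.e. `dist x z ^ p + dist z y ^ p ≥ dist x y ^ p`, then
no such `z` lies strictly inside the open disc with diameter the segment from
`x` to `y`. -/
theorem kumar_subset_gabriel (p : ℝ) (hp : 2 ≤ p)
    (S : Set (EuclideanSpace ℝ (Fin 2))) (x y : EuclideanSpace ℝ (Fin 2))
    (hx : x ∈ S) (hy : y ∈ S) (hxy : x ≠ y)
    (h : ∀ z ∈ S, z ≠ x → z ≠ y →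
      dist x y ^ p ≤ dist x z ^ p + dist z y ^ p) :
    ¬ ∃ z ∈ S, z ≠ x ∧ z ≠ y ∧ dist z (midpoint ℝ x y) < dist x y / 2 :=
  kumar_subset_gabriel_general p hp S x y h
end

section
/- Let 1 ≤ p ≤ q be real numbers, and let k₀, k₁, …, k_m (m ≥ 1) be points in a metric space. If ∑_{i=1}^m d(k_{i−1}, k_i)^q ≥ d(k₀, k_m)^q, then ∑_{i=1}^m d(k_{i−1}, k_i)^p ≥ d(k₀, k_m)^p. Consequently, every edge of the network G_q is an edge of the network G_p, i.e., the networks G_p decrease as p increases. -/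
/-!
If one step of the route is at least as long as `D = d(k₀, k_m)`, its `p`th power alone
dominates `D ^ p`. Otherwise every step length `x` satisfies `x ^ q ≤ x ^ p * D ^ (q - p)`,
so the hypothesis gives `D ^ p * D ^ (q - p) ≤ (∑ x ^ p) * D ^ (q - p)`, and we cancel.
-/

open Finset

namespace Real

lemma rpow_le_rpow_mul_rpow_sub_of_le {x D p q : ℝ} (hx : 0 ≤ x) (hxD : x ≤ D)
    (hq : 0 < q) (hpq : p ≤ q) : x ^ q ≤ x ^ p * D ^ (q - p) := by
  calc x ^ q = x ^ p * x ^ (q - p) := by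
        rw [← rpow_add' hx (by simpa using hq.ne'), add_sub_cancel]
    _ ≤ x ^ p * D ^ (q - p) := by gcongr

lemma rpow_le_sum_rpow_of_rpow_le_sum_rpow {ι : Type*} {s : Finset ι} {f : ι → ℝ}
    {D p q : ℝ} (hf : ∀ i ∈ s, 0 ≤ f i) (hD : 0 ≤ D) (hp : 0 < p) (hpq : p ≤ q)
    (hq : D ^ q ≤ ∑ i ∈ s, f i ^ q) : D ^ p ≤ ∑ i ∈ s, f i ^ p := by
  have hpow_nonneg : ∀ i ∈ s, 0 ≤ f i ^ p := fun i hi => rpow_nonneg (hf i hi) p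
  rcases hD.eq_or_lt with rfl | hD_pos
  · rw [zero_rpow hp.ne']
    exact sum_nonneg hpow_nonneg
  by_cases hlong : ∃ i ∈ s, D ≤ f i
  · obtain ⟨i, hi, hDi⟩ := hlong
    calc D ^ p ≤ f i ^ p := rpow_le_rpow hD hDi hp.le
      _ ≤ ∑ j ∈ s, f j ^ p := single_le_sum hpow_nonneg hi
  push Not at hlong
  refine le_of_mul_le_mul_right ?_ (rpow_pos_of_pos hD_pos (q - p))
  calc D ^ p * D ^ (q - p) = D ^ q := by rw [← rpow_add hD_pos, add_sub_cancel]
    _ ≤ ∑ i ∈ s, f i ^ q := hq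
    _ ≤ ∑ i ∈ s, f i ^ p * D ^ (q - p) := sum_le_sum fun i hi =>
        rpow_le_rpow_mul_rpow_sub_of_le (hf i hi) (hlong i hi).le (hp.trans_le hpq) hpq
    _ = (∑ i ∈ s, f i ^ p) * D ^ (q - p) := (sum_mul ..).symm

end Real

theorem kumar_networks_decrease_general {α : Type*} [MetricSpace α]
    (p q : ℝ) (hp : 1 ≤ p) (hpq : p ≤ q)
    (m : ℕ) (k : ℕ → α)
    (hq : dist (k 0) (k m) ^ q ≤ ∑ i ∈ Finset.range m, dist (k i) (k (i + 1)) ^ q) :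
    dist (k 0) (k m) ^ p ≤ ∑ i ∈ Finset.range m, dist (k i) (k (i + 1)) ^ p :=
  Real.rpow_le_sum_rpow_of_rpow_le_sum_rpow (fun _ _ => dist_nonneg) dist_nonneg
    (by linarith) hpq hq

/-- Monotonicity of the networks `G_p`: for `1 ≤ p ≤ q` and any route
`k₀, k₁, …, k_m` (`m ≥ 1`) in a metric space, if the `q`th-power cost of the
route is at least `d(k₀, k_m)^q`, then the `p`th-power cost is at least
`d(k₀, k_m)^p`. Consequently every edge of `G_q` is an edge of `G_p`. -/
theorem kumar_networks_decrease {α : Type*} [MetricSpace α]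
    (p q : ℝ) (hp : 1 ≤ p) (hpq : p ≤ q)
    (m : ℕ) (hm : 1 ≤ m) (k : ℕ → α)
    (hq : dist (k 0) (k m) ^ q ≤ ∑ i ∈ Finset.range m, dist (k i) (k (i + 1)) ^ q) :
    dist (k 0) (k m) ^ p ≤ ∑ i ∈ Finset.range m, dist (k i) (k (i + 1)) ^ p :=
  kumar_networks_decrease_general p q hp hpq m k hq
end
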